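/- For any positive integers N, L and d with d ≥ 2, there exists a fully connected ReLU network φ×^d ∈ F_{d,1}((L+1)(d−1)+d−2, 9N+d−2) such that (1) |φ×^d(z) − ∏ᵢ₌₁^d zᵢ| ≤ 12(d−1)N^{−L} for all z = (z₁,…,z_d) ∈ [0,1]^d, and (2) |φ×^d(z)| ≤ 1 for all z ∈ [0,1]^d. -/

import Mathlib

open Finset

/-- Iterated hidden layers of a fully connected ReLU network of width `W`:
starting from `x0`, apply `k` further affine-plus-shifted-ReLU layers
(`A k` is the weight matrix `A_{k+2}` and `v (k+1)` the shift vector `v_{k+2}`). -/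
noncomputable def hiddenIter (W : ℕ) (A : ℕ → Matrix (Fin W) (Fin W) ℝ)
    (v : ℕ → Fin W → ℝ) (x0 : Fin W → ℝ) : ℕ → Fin W → ℝ
  | 0 => x0
  | k + 1 => fun i => max (((A k).mulVec (hiddenIter W A v x0 k)) i - v (k + 1) i) 0

/-- The class `F_{d,q}(L,W)` of fully connected ReLU networks with depth `L`
(number of hidden layers), width `W`, input dimension `d`, output dimension `q`:
`f(z) = v_{L+1} + A_{L+1} σ_{v_L}(A_L σ_{v_{L−1}}(⋯ A_2 σ_{v_1}(A_1 z)⋯))`. -/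
noncomputable def NNclass (d q L W : ℕ) : Set ((Fin d → ℝ) → (Fin q → ℝ)) :=
  {f | ∃ (A₁ : Matrix (Fin W) (Fin d) ℝ) (A : ℕ → Matrix (Fin W) (Fin W) ℝ)
      (v : ℕ → Fin W → ℝ) (Aout : Matrix (Fin q) (Fin W) ℝ) (vout : Fin q → ℝ),
      ∀ z, f z = vout + Aout.mulVec
        (hiddenIter W A v (fun i => max ((A₁.mulVec z) i - v 0 i) 0) (L - 1))}

/-- The class `F_{d,1}(L,W)` of scalar-valued fully connected ReLU networks. -/
noncomputable def NNscalar (d L W : ℕ) : Set ((Fin d → ℝ) → ℝ) :=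
  {f | ∃ g ∈ NNclass d 1 L W, ∀ z, f z = g z 0}

/-!
Yarotsky's construction. The zigzag `T` through the points `(j / N, j mod 2)` maps `[0, 1]` onto
itself, and the piecewise linear interpolant `D` of `s (1 - s)` on the grid `j / N` satisfies
`s (1 - s) = D s + T s (1 - T s) / N²`. Iterating,
`t² = t - ∑_{i < k} D (Tⁱ t) / N^{2i} - Tᵏ t (1 - Tᵏ t) / N^{2k}`, and a ReLU network of width
`N + 1` adds one term of the sum per layer, keeping the features `(Tⁱ t - j / N)₊` and the running
sum as its hidden state. So `L` layers approximate `t²` within `N^{-2L} / 4`. By polarisation,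
`x y = 2 ((x + y) / 2)² - x² / 2 - y² / 2`, three such networks side by side followed by a clamp to
`[0, 1]` multiply two numbers of `[0, 1]` within `N^{-2L} / 2`. Chaining `d - 1` of them, while the
coordinates not yet used are carried through identity ReLU layers, multiplies `d` numbers within
`(d - 1) N^{-2L} / 2`.
-/

open Matrix

def relu {κ : Type*} (x : κ → ℝ) : κ → ℝ := fun i => max (x i) 0

lemma relu_nonneg {κ : Type*} (x : κ → ℝ) : 0 ≤ relu x := fun _ => le_max_right _ _

lemma relu_of_nonneg {κ : Type*} {x : κ → ℝ} (hx : 0 ≤ x) : relu x = x :=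
  funext fun i => max_eq_left (hx i)

/-- Feature maps computed by `k + 1` hidden ReLU layers, each with neurons indexed by `κ`. -/
def reluFeatures (ι κ : Type*) [Fintype ι] [Fintype κ] : ℕ → Set ((ι → ℝ) → κ → ℝ)
  | 0 => {h | ∃ (A : Matrix κ ι ℝ) (v : κ → ℝ), h = fun x => relu (A *ᵥ x - v)}
  | k + 1 => {h | ∃ g ∈ reluFeatures ι κ k, ∃ (A : Matrix κ κ ℝ) (v : κ → ℝ),
      h = fun x => relu (A *ᵥ g x - v)}

def reluNet (ι π κ : Type*) [Fintype ι] [Fintype κ] (k : ℕ) : Set ((ι → ℝ) → π → ℝ) :=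
  {f | ∃ h ∈ reluFeatures ι κ k, ∃ (C : Matrix π κ ℝ) (c : π → ℝ), f = fun x => c + C *ᵥ h x}

section NetworkCalculus

variable {ι ο π κ κ' : Type*} [Fintype ι] [Fintype ο] [Fintype κ] [Fintype κ']

lemma nonneg_of_mem_reluFeatures {k : ℕ} {h : (ι → ℝ) → κ → ℝ}
    (hh : h ∈ reluFeatures ι κ k) (x : ι → ℝ) : 0 ≤ h x := by
  cases k with
  | zero => obtain ⟨A, v, rfl⟩ := hh; exact relu_nonneg _
  | succ k => obtain ⟨g, -, A, v, rfl⟩ := hh; exact relu_nonneg _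

lemma zero_mem_reluFeatures (k : ℕ) : (0 : (ι → ℝ) → κ → ℝ) ∈ reluFeatures ι κ k := by
  have hrelu : relu (0 : κ → ℝ) = 0 := relu_of_nonneg le_rfl
  induction k with
  | zero => exact ⟨0, 0, funext fun x => by rw [zero_mulVec, sub_zero, hrelu]; rfl⟩
  | succ k ih => exact ⟨0, ih, 0, 0, funext fun x => by rw [zero_mulVec, sub_zero, hrelu]; rfl⟩

lemma comp_mulVec_mem_reluFeatures {k : ℕ} {h : (ο → ℝ) → κ → ℝ}
    (hh : h ∈ reluFeatures ο κ k) (M : Matrix ο ι ℝ) :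
    (fun x => h (M *ᵥ x)) ∈ reluFeatures ι κ k := by
  induction k generalizing h with
  | zero =>
    obtain ⟨A, v, rfl⟩ := hh
    exact ⟨A * M, v, by simp only [mulVec_mulVec]⟩
  | succ k ih =>
    obtain ⟨g, hg, A, v, rfl⟩ := hh
    exact ⟨_, ih hg, A, v, rfl⟩

lemma comp_mem_reluFeatures {a b : ℕ} {g : (ι → ℝ) → κ → ℝ} {h : (ο → ℝ) → κ → ℝ}
    (hg : g ∈ reluFeatures ι κ a) (hh : h ∈ reluFeatures ο κ b)
    (C : Matrix ο κ ℝ) (c : ο → ℝ) :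
    (fun x => h (c + C *ᵥ g x)) ∈ reluFeatures ι κ (a + b + 1) := by
  induction b generalizing h with
  | zero =>
    obtain ⟨A, v, rfl⟩ := hh
    refine ⟨g, hg, A * C, v - A *ᵥ c, funext fun x => ?_⟩
    dsimp only
    rw [mulVec_add, mulVec_mulVec, sub_sub_eq_add_sub, add_comm]
  | succ b ih =>
    obtain ⟨h', hh', A, v, rfl⟩ := hh
    exact ⟨_, ih hh', A, v, rfl⟩

lemma sumElim_mem_reluFeatures {k : ℕ} {h₁ : (ι → ℝ) → κ → ℝ} {h₂ : (ι → ℝ) → κ' → ℝ}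
    (hh₁ : h₁ ∈ reluFeatures ι κ k) (hh₂ : h₂ ∈ reluFeatures ι κ' k) :
    (fun x => Sum.elim (h₁ x) (h₂ x)) ∈ reluFeatures ι (κ ⊕ κ') k := by
  induction k generalizing h₁ h₂ with
  | zero =>
    obtain ⟨A₁, v₁, rfl⟩ := hh₁
    obtain ⟨A₂, v₂, rfl⟩ := hh₂
    exact ⟨fromRows A₁ A₂, Sum.elim v₁ v₂, funext fun x => funext fun i => by cases i <;> rfl⟩
  | succ k ih =>
    obtain ⟨g₁, hg₁, A₁, v₁, rfl⟩ := hh₁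
    obtain ⟨g₂, hg₂, A₂, v₂, rfl⟩ := hh₂
    refine ⟨_, ih hg₁ hg₂, fromBlocks A₁ 0 0 A₂, Sum.elim v₁ v₂, funext fun x => ?_⟩
    simp only [fromBlocks_mulVec, zero_mulVec, add_zero, zero_add, Sum.elim_comp_inl,
      Sum.elim_comp_inr]
    funext i
    cases i <;> rfl

lemma comp_equiv_mem_reluFeatures {k : ℕ} {h : (ι → ℝ) → κ → ℝ}
    (hh : h ∈ reluFeatures ι κ k) (e : κ' ≃ κ) :
    (fun x => h x ∘ e) ∈ reluFeatures ι κ' k := by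
  induction k generalizing h with
  | zero =>
    obtain ⟨A, v, rfl⟩ := hh
    exact ⟨A.submatrix e id, v ∘ e, rfl⟩
  | succ k ih =>
    obtain ⟨g, hg, A, v, rfl⟩ := hh
    refine ⟨_, ih hg, A.submatrix e e, v ∘ e, funext fun x => ?_⟩
    rw [submatrix_mulVec_equiv, Function.comp_assoc, e.self_comp_symm, Function.comp_id]
    rfl

lemma zero_mem_reluNet (k : ℕ) : (0 : (ι → ℝ) → π → ℝ) ∈ reluNet ι π κ k :=
  ⟨0, zero_mem_reluFeatures k, 0, 0, funext fun x => by rw [zero_mulVec, add_zero]; rfl⟩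

lemma affine_comp_mem_reluNet {k : ℕ} {f : (ι → ℝ) → ο → ℝ} (hf : f ∈ reluNet ι ο κ k)
    (C : Matrix π ο ℝ) (c : π → ℝ) : (fun x => c + C *ᵥ f x) ∈ reluNet ι π κ k := by
  obtain ⟨h, hh, C', c', rfl⟩ := hf
  refine ⟨h, hh, C * C', c + C *ᵥ c', funext fun x => ?_⟩
  rw [mulVec_add, mulVec_mulVec, add_assoc]

lemma smul_mem_reluNet {k : ℕ} {f : (ι → ℝ) → π → ℝ} (hf : f ∈ reluNet ι π κ k) (a : ℝ) :
    a • f ∈ reluNet ι π κ k := by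
  obtain ⟨h, hh, C, c, rfl⟩ := hf
  refine ⟨h, hh, a • C, a • c, funext fun x => ?_⟩
  rw [Pi.smul_apply, smul_add, smul_mulVec]

lemma comp_mulVec_mem_reluNet {k : ℕ} {f : (ο → ℝ) → π → ℝ} (hf : f ∈ reluNet ο π κ k)
    (M : Matrix ο ι ℝ) : (fun x => f (M *ᵥ x)) ∈ reluNet ι π κ k := by
  obtain ⟨h, hh, C, c, rfl⟩ := hf
  exact ⟨_, comp_mulVec_mem_reluFeatures hh M, C, c, rfl⟩

lemma precomp_mem_reluNet {k : ℕ} {f : (ο → ℝ) → π → ℝ} (hf : f ∈ reluNet ο π κ k)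
    (e : ο → ι) : (fun x => f (x ∘ e)) ∈ reluNet ι π κ k := by
  classical
  have he (x : ι → ℝ) : (1 : Matrix ι ι ℝ).submatrix e id *ᵥ x = x ∘ e := by
    rw [show (1 : Matrix ι ι ℝ).submatrix e id *ᵥ x = (1 *ᵥ x) ∘ e from rfl, one_mulVec]
  simpa only [he] using comp_mulVec_mem_reluNet hf ((1 : Matrix ι ι ℝ).submatrix e id)

lemma comp_mem_reluNet {a b : ℕ} {f : (ι → ℝ) → ο → ℝ} {g : (ο → ℝ) → π → ℝ}
    (hf : f ∈ reluNet ι ο κ a) (hg : g ∈ reluNet ο π κ b) :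
    (fun x => g (f x)) ∈ reluNet ι π κ (a + b + 1) := by
  obtain ⟨h, hh, C, c, rfl⟩ := hf
  obtain ⟨h', hh', C', c', rfl⟩ := hg
  exact ⟨_, comp_mem_reluFeatures hh hh' C c, C', c', rfl⟩

lemma add_mem_reluNet {k : ℕ} {f : (ι → ℝ) → π → ℝ} {g : (ι → ℝ) → π → ℝ}
    (hf : f ∈ reluNet ι π κ k) (hg : g ∈ reluNet ι π κ' k) : f + g ∈ reluNet ι π (κ ⊕ κ') k := by
  obtain ⟨h, hh, C, c, rfl⟩ := hf
  obtain ⟨h', hh', C', c', rfl⟩ := hg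
  refine ⟨_, sumElim_mem_reluFeatures hh hh', fromCols C C', c + c', funext fun x => ?_⟩
  rw [Pi.add_apply, fromCols_mulVec_sumElim, add_add_add_comm]

lemma pair_mem_reluNet {k : ℕ} {f : (ι → ℝ) → Fin 1 → ℝ} {g : (ι → ℝ) → Fin 1 → ℝ}
    (hf : f ∈ reluNet ι (Fin 1) κ k) (hg : g ∈ reluNet ι (Fin 1) κ' k) :
    (fun x => ![f x 0, g x 0]) ∈ reluNet ι (Fin 2) (κ ⊕ κ') k := by
  convert add_mem_reluNet (affine_comp_mem_reluNet hf (Matrix.of ![![1], ![0]]) 0)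
    (affine_comp_mem_reluNet hg (Matrix.of ![![0], ![1]]) 0) using 1
  funext x i
  fin_cases i <;> simp [vecHead]

lemma reluNet_congr_width {k : ℕ} {f : (ι → ℝ) → π → ℝ} (hf : f ∈ reluNet ι π κ k)
    (e : κ' ≃ κ) : f ∈ reluNet ι π κ' k := by
  obtain ⟨h, hh, C, c, rfl⟩ := hf
  refine ⟨_, comp_equiv_mem_reluFeatures hh e, C.submatrix id e, c, funext fun x => ?_⟩
  rw [submatrix_mulVec_equiv, Function.comp_assoc, e.self_comp_symm, Function.comp_id]
  rfl

lemma reluNet_mono_width {k : ℕ} {f : (ι → ℝ) → π → ℝ} (hf : f ∈ reluNet ι π κ k)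
    (hκ : Fintype.card κ ≤ Fintype.card κ') : f ∈ reluNet ι π κ' k := by
  have hpad : f + 0 ∈ reluNet ι π (κ ⊕ Fin (Fintype.card κ' - Fintype.card κ)) k :=
    add_mem_reluNet hf (zero_mem_reluNet k)
  rw [add_zero] at hpad
  refine reluNet_congr_width hpad (Fintype.equivOfCardEq ?_)
  rw [Fintype.card_sum, Fintype.card_fin]
  omega

lemma reluNet_succ {k : ℕ} {f : (ι → ℝ) → π → ℝ} (hf : f ∈ reluNet ι π κ k) :
    f ∈ reluNet ι π κ (k + 1) := by
  classical
  obtain ⟨h, hh, C, c, rfl⟩ := hf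
  refine ⟨h, ⟨h, hh, 1, 0, funext fun x => ?_⟩, C, c, rfl⟩
  rw [one_mulVec, sub_zero, relu_of_nonneg (nonneg_of_mem_reluFeatures hh x)]

lemma reluNet_mono_depth {k k' : ℕ} {f : (ι → ℝ) → π → ℝ} (hf : f ∈ reluNet ι π κ k)
    (hk : k ≤ k') : f ∈ reluNet ι π κ k' := by
  induction k', hk using Nat.le_induction with
  | base => exact hf
  | succ k' _ ih => exact reluNet_succ ih

lemma relu_mem_reluNet (k : ℕ) : (relu : (ι → ℝ) → ι → ℝ) ∈ reluNet ι ι ι k := by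
  classical
  have h₀ : (relu : (ι → ℝ) → ι → ℝ) ∈ reluNet ι ι ι 0 :=
    ⟨relu, ⟨1, 0, by simp only [one_mulVec, sub_zero]⟩, 1, 0, by simp only [one_mulVec, zero_add]⟩
  exact reluNet_mono_depth h₀ (Nat.zero_le k)

end NetworkCalculus

lemma hiddenIter_update {W k n : ℕ} (A : ℕ → Matrix (Fin W) (Fin W) ℝ) (v : ℕ → Fin W → ℝ)
    (x₀ : Fin W → ℝ) (B : Matrix (Fin W) (Fin W) ℝ) (w : Fin W → ℝ) (hn : n ≤ k) :
    hiddenIter W (Function.update A k B) (Function.update v (k + 1) w) x₀ n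
      = hiddenIter W A v x₀ n := by
  induction n with
  | zero => rfl
  | succ n ih =>
    simp only [hiddenIter, ih (by omega), Function.update_of_ne (show n ≠ k by omega),
      Function.update_of_ne (show n + 1 ≠ k + 1 by omega)]

lemma exists_hiddenIter_of_mem_reluFeatures {d W k : ℕ} {h : (Fin d → ℝ) → Fin W → ℝ}
    (hh : h ∈ reluFeatures (Fin d) (Fin W) k) :
    ∃ (A₁ : Matrix (Fin W) (Fin d) ℝ) (A : ℕ → Matrix (Fin W) (Fin W) ℝ) (v : ℕ → Fin W → ℝ),
      ∀ z, h z = hiddenIter W A v (relu (A₁ *ᵥ z - v 0)) k := by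
  induction k generalizing h with
  | zero =>
    obtain ⟨A₁, v, rfl⟩ := hh
    exact ⟨A₁, 0, fun _ => v, fun z => rfl⟩
  | succ k ih =>
    obtain ⟨g, hg, B, w, rfl⟩ := hh
    obtain ⟨A₁, A, v, hgz⟩ := ih hg
    refine ⟨A₁, Function.update A k B, Function.update v (k + 1) w, fun z => ?_⟩
    have hv₀ : Function.update v (k + 1) w 0 = v 0 := Function.update_of_ne (by omega) _ _
    simp only [hiddenIter, hv₀, hiddenIter_update A v _ B w le_rfl, Function.update_self, hgz]
    rfl

lemma mem_NNclass_of_mem_reluNet {d q k L W : ℕ} {κ : Type*} [Fintype κ]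
    {f : (Fin d → ℝ) → Fin q → ℝ} (hf : f ∈ reluNet (Fin d) (Fin q) κ k) (hk : k < L)
    (hκ : Fintype.card κ ≤ W) : f ∈ NNclass d q L W := by
  have hf' := reluNet_mono_depth (reluNet_mono_width hf (κ' := Fin W) (by simpa using hκ))
    (Nat.le_sub_one_of_lt hk)
  obtain ⟨h, hh, C, c, rfl⟩ := hf'
  obtain ⟨A₁, A, v, hz⟩ := exists_hiddenIter_of_mem_reluFeatures hh
  exact ⟨A₁, A, v, C, c, fun z => congrArg (c + C *ᵥ ·) (hz z)⟩

lemma sum_mul_max_sub_eq_of_mem {n j : ℕ} {a : ℕ → ℝ} (ha : Monotone a) (c : ℕ → ℝ) (hj : j < n)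
    {s : ℝ} (hs₁ : a j ≤ s) (hs₂ : s ≤ a (j + 1)) :
    ∑ i ∈ range n, c i * max (s - a i) 0 = ∑ i ∈ range (j + 1), c i * (s - a i) := by
  rw [← sum_range_add_sum_Ico _ hj]
  have above : ∑ i ∈ Ico (j + 1) n, c i * max (s - a i) 0 = 0 :=
    sum_eq_zero fun i hi => by
      rw [max_eq_right (by linarith [ha (mem_Ico.mp hi).1]), mul_zero]
  rw [above, add_zero]
  refine sum_congr rfl fun i hi => ?_
  rw [max_eq_left (by linarith [ha (Nat.lt_succ_iff.mp (mem_range.mp hi))])]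

lemma natCast_div_monotone (N : ℕ) : Monotone fun j : ℕ => (j : ℝ) / N :=
  fun _ _ h => div_le_div_of_nonneg_right (Nat.cast_le.mpr h) N.cast_nonneg

lemma exists_mem_Icc_div {N : ℕ} (hN : 0 < N) {s : ℝ} (hs : s ∈ Set.Icc (0 : ℝ) 1) :
    ∃ j < N, (j : ℝ) / N ≤ s ∧ s ≤ ((j + 1 : ℕ) : ℝ) / N := by
  have hN' : (0 : ℝ) < N := by exact_mod_cast hN
  refine ⟨min ⌊N * s⌋₊ (N - 1), by omega, ?_, ?_⟩
  · rw [div_le_iff₀ hN']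
    calc ((min ⌊N * s⌋₊ (N - 1) : ℕ) : ℝ) ≤ ⌊N * s⌋₊ := by exact_mod_cast min_le_left _ _
      _ ≤ N * s := Nat.floor_le (by nlinarith [hs.1])
      _ = s * N := mul_comm _ _
  · rw [le_div_iff₀ hN']
    rcases le_total ⌊N * s⌋₊ (N - 1) with h | h
    · rw [min_eq_left h, Nat.cast_add_one]
      nlinarith [Nat.lt_floor_add_one ((N : ℝ) * s)]
    · rw [min_eq_right h, Nat.sub_add_cancel hN]
      nlinarith [hs.2]

noncomputable def zigzagCoeff (N j : ℕ) : ℝ := if j = 0 then N else (-1) ^ j * (2 * N)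

/-- The zigzag through the points `(j / N, j mod 2)`, with slopes `±N`. -/
noncomputable def zigzag (N : ℕ) (s : ℝ) : ℝ := ∑ j ∈ range N, zigzagCoeff N j * max (s - j / N) 0

noncomputable def chordCoeff (N j : ℕ) : ℝ := if j = 0 then 1 - 1 / N else -(2 / N)

/-- The piecewise linear interpolant of `s * (1 - s)` at the nodes `j / N`. -/
noncomputable def chord (N : ℕ) (s : ℝ) : ℝ := ∑ j ∈ range N, chordCoeff N j * max (s - j / N) 0

lemma sum_zigzagCoeff_mul {N : ℕ} (hN : 0 < N) (s : ℝ) (j : ℕ) :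
    ∑ i ∈ range (j + 1), zigzagCoeff N i * (s - i / N)
      = if Even j then N * s - j else j + 1 - N * s := by
  have hN' : (N : ℝ) ≠ 0 := by positivity
  induction j with
  | zero => simp [zigzagCoeff]
  | succ j ih =>
    rw [sum_range_succ, ih]
    rw [zigzagCoeff, if_neg j.succ_ne_zero, pow_succ]
    rcases Nat.even_or_odd j with h | h
    · rw [if_pos h, if_neg (Nat.not_even_iff_odd.mpr h.add_one), h.neg_one_pow]
      push_cast
      field_simp
      ring
    · rw [if_neg (Nat.not_even_iff_odd.mpr h), if_pos h.add_one, h.neg_one_pow]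
      push_cast
      field_simp
      ring

lemma sum_chordCoeff_mul (N : ℕ) (s : ℝ) (j : ℕ) :
    ∑ i ∈ range (j + 1), chordCoeff N i * (s - i / N)
      = s * (1 - (2 * j + 1) / N) + j * (j + 1) / N ^ 2 := by
  induction j with
  | zero =>
    rw [zero_add, sum_range_one, chordCoeff, if_pos rfl]
    push_cast
    ring
  | succ j ih =>
    rw [sum_range_succ, ih]
    simp only [chordCoeff, Nat.add_one_ne_zero, if_false]
    push_cast
    rcases eq_or_ne (N : ℝ) 0 with hN | hN
    · simp [hN]
    · field_simp
      ring

lemma zigzag_mem_Icc {N : ℕ} (hN : 0 < N) {s : ℝ} (hs : s ∈ Set.Icc (0 : ℝ) 1) :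
    zigzag N s ∈ Set.Icc (0 : ℝ) 1 := by
  obtain ⟨j, hj, hs₁, hs₂⟩ := exists_mem_Icc_div hN hs
  have hN' : (0 : ℝ) < N := by exact_mod_cast hN
  rw [zigzag, sum_mul_max_sub_eq_of_mem (natCast_div_monotone N) _ hj hs₁ hs₂,
    sum_zigzagCoeff_mul hN]
  rw [div_le_iff₀ hN'] at hs₁
  rw [le_div_iff₀ hN', Nat.cast_add_one] at hs₂
  split_ifs <;> constructor <;> nlinarith

-- On `[j / N, (j + 1) / N]` both sides minus `chord N s` equal `(s - j / N) ((j + 1) / N - s)`.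
lemma mul_one_sub_eq_chord_add {N : ℕ} (hN : 0 < N) {s : ℝ} (hs : s ∈ Set.Icc (0 : ℝ) 1) :
    s * (1 - s) = chord N s + zigzag N s * (1 - zigzag N s) / N ^ 2 := by
  obtain ⟨j, hj, hs₁, hs₂⟩ := exists_mem_Icc_div hN hs
  have hN' : (N : ℝ) ≠ 0 := by positivity
  rw [zigzag, chord, sum_mul_max_sub_eq_of_mem (natCast_div_monotone N) _ hj hs₁ hs₂,
    sum_mul_max_sub_eq_of_mem (natCast_div_monotone N) _ hj hs₁ hs₂,
    sum_zigzagCoeff_mul hN, sum_chordCoeff_mul]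
  split_ifs <;> field_simp <;> ring

noncomputable def sqApprox (N k : ℕ) (t : ℝ) : ℝ :=
  t - ∑ i ∈ range k, chord N ((zigzag N)^[i] t) / (N : ℝ) ^ (2 * i)

lemma iterate_zigzag_mem_Icc {N : ℕ} (hN : 0 < N) {t : ℝ} (ht : t ∈ Set.Icc (0 : ℝ) 1) (k : ℕ) :
    (zigzag N)^[k] t ∈ Set.Icc (0 : ℝ) 1 := by
  induction k with
  | zero => exact ht
  | succ k ih => rw [Function.iterate_succ_apply']; exact zigzag_mem_Icc hN ih

lemma sqApprox_eq {N : ℕ} (hN : 0 < N) {t : ℝ} (ht : t ∈ Set.Icc (0 : ℝ) 1) (k : ℕ) :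
    sqApprox N k t = t ^ 2 + (zigzag N)^[k] t * (1 - (zigzag N)^[k] t) / (N : ℝ) ^ (2 * k) := by
  have hN' : (N : ℝ) ≠ 0 := by positivity
  induction k with
  | zero =>
    rw [sqApprox, sum_range_zero, Function.iterate_zero_apply, mul_zero, pow_zero, div_one]
    ring
  | succ k ih =>
    have hk : sqApprox N (k + 1) t = sqApprox N k t - chord N ((zigzag N)^[k] t) / N ^ (2 * k) := by
      rw [sqApprox, sqApprox, sum_range_succ, sub_add_eq_sub_sub]
    rw [hk, ih, mul_one_sub_eq_chord_add hN (iterate_zigzag_mem_Icc hN ht k),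
      Function.iterate_succ_apply', mul_add, pow_add]
    field_simp
    ring

lemma sqApprox_sub_sq_mem_Icc {N : ℕ} (hN : 0 < N) {t : ℝ} (ht : t ∈ Set.Icc (0 : ℝ) 1) (k : ℕ) :
    sqApprox N k t - t ^ 2 ∈ Set.Icc 0 (((N : ℝ) ^ (2 * k))⁻¹ / 4) := by
  obtain ⟨hu₀, hu₁⟩ := iterate_zigzag_mem_Icc hN ht k
  set u := (zigzag N)^[k] t
  have hpow : (0 : ℝ) < (N : ℝ) ^ (2 * k) := by positivity
  rw [sqApprox_eq hN ht k, add_sub_cancel_left]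
  constructor
  · exact div_nonneg (by nlinarith) hpow.le
  · calc u * (1 - u) / (N : ℝ) ^ (2 * k) ≤ (1 / 4) / (N : ℝ) ^ (2 * k) :=
          div_le_div_of_nonneg_right (by nlinarith [sq_nonneg (u - 1 / 2)]) hpow.le
      _ = ((N : ℝ) ^ (2 * k))⁻¹ / 4 := by ring

section Squaring

variable {N : ℕ}

noncomputable def sqState (N k : ℕ) (t : ℝ) : Fin N ⊕ Unit → ℝ :=
  Sum.elim (fun j => max ((zigzag N)^[k] t - j / N) 0) fun _ => sqApprox N k t

noncomputable def gridShift (N : ℕ) : Fin N ⊕ Unit → ℝ := Sum.elim (fun j => j / N) 0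

noncomputable def sqReadout (N k : ℕ) : Fin N ⊕ Unit → ℝ :=
  Sum.elim (fun j => -(chordCoeff N j / (N : ℝ) ^ (2 * k))) fun _ => 1

lemma sumElim_dotProduct_sqState (c : ℕ → ℝ) (a : ℝ) (k : ℕ) (t : ℝ) :
    Sum.elim (fun j : Fin N => c j) (fun _ => a) ⬝ᵥ sqState N k t
      = ∑ j ∈ range N, c j * max ((zigzag N)^[k] t - j / N) 0 + a * sqApprox N k t := by
  simp only [dotProduct, Fintype.sum_sum_type, Sum.elim_inl, Sum.elim_inr, sqState,
    univ_unique, sum_singleton]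
  rw [Fin.sum_univ_eq_sum_range (fun j => c j * max ((zigzag N)^[k] t - j / N) 0)]

lemma zigzagCoeff_dotProduct_sqState (k : ℕ) (t : ℝ) :
    Sum.elim (fun j : Fin N => zigzagCoeff N j) (fun _ => 0) ⬝ᵥ sqState N k t
      = (zigzag N)^[k + 1] t := by
  rw [sumElim_dotProduct_sqState, zero_mul, add_zero, Function.iterate_succ_apply', zigzag]

lemma sqReadout_dotProduct_sqState (k : ℕ) (t : ℝ) :
    sqReadout N k ⬝ᵥ sqState N k t = sqApprox N (k + 1) t := by
  rw [sqReadout, sumElim_dotProduct_sqState (fun j => -(chordCoeff N j / (N : ℝ) ^ (2 * k))),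
    sqApprox, sqApprox, sum_range_succ, chord, sum_div]
  simp only [neg_mul, sum_neg_distrib, one_mul, div_mul_eq_mul_div]
  ring

lemma exists_reluFeatures_sqState (hN : 0 < N) (k : ℕ) :
    ∃ h ∈ reluFeatures (Fin 1) (Fin N ⊕ Unit) k,
      ∀ t ∈ Set.Icc (0 : ℝ) 1, h (fun _ => t) = sqState N k t := by
  induction k with
  | zero =>
    refine ⟨_, ⟨Matrix.of fun _ _ => 1, gridShift N, rfl⟩, fun t ht => ?_⟩
    funext i
    rcases i with j | _
    · simp [relu, gridShift, sqState, mulVec, dotProduct]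
    · simp [relu, gridShift, sqState, mulVec, dotProduct, sqApprox, ht.1]
  | succ k ih =>
    obtain ⟨h, hh, hsq⟩ := ih
    refine ⟨_, ⟨h, hh, Matrix.of (Sum.elim
      (fun _ => Sum.elim (fun j : Fin N => zigzagCoeff N j) (fun _ => 0)) fun _ => sqReadout N k),
      gridShift N, rfl⟩, fun t ht => ?_⟩
    funext i
    rcases i with j | _
    · show max (Sum.elim (fun j : Fin N => zigzagCoeff N j) (fun _ => 0) ⬝ᵥ h (fun _ => t)
        - j / N) 0 = _
      rw [hsq t ht, zigzagCoeff_dotProduct_sqState]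
      rfl
    · have hpos : 0 ≤ sqApprox N (k + 1) t := by
        linarith [(sqApprox_sub_sq_mem_Icc hN ht (k + 1)).1, sq_nonneg t]
      show max (sqReadout N k ⬝ᵥ h (fun _ => t) - 0) 0 = _
      rw [hsq t ht, sqReadout_dotProduct_sqState, sub_zero, max_eq_left hpos]
      rfl

lemma exists_reluNet_sqApprox (hN : 0 < N) (k : ℕ) {m : ℕ} (w : Fin m → ℝ) :
    ∃ f ∈ reluNet (Fin m) (Fin 1) (Fin N ⊕ Unit) k,
      ∀ x, w ⬝ᵥ x ∈ Set.Icc (0 : ℝ) 1 → f x 0 = sqApprox N (k + 1) (w ⬝ᵥ x) := by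
  obtain ⟨h, hh, hsq⟩ := exists_reluFeatures_sqState hN k
  have hf : (fun y => 0 + Matrix.of (fun _ => sqReadout N k) *ᵥ h y) ∈
      reluNet (Fin 1) (Fin 1) (Fin N ⊕ Unit) k := ⟨h, hh, _, 0, rfl⟩
  refine ⟨_, comp_mulVec_mem_reluNet hf (Matrix.of fun _ => w), fun x hx => ?_⟩
  show 0 + sqReadout N k ⬝ᵥ h (fun _ => w ⬝ᵥ x) = _
  rw [hsq _ hx, sqReadout_dotProduct_sqState, zero_add]

end Squaring

lemma exists_reluNet_clamp :
    ∃ c ∈ reluNet (Fin 1) (Fin 1) (Fin 2) 0, ∀ y, c y 0 = max (y 0) 0 - max (y 0 - 1) 0 := by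
  refine ⟨_, ⟨_, ⟨Matrix.of fun _ _ => 1, ![0, 1], rfl⟩, Matrix.of fun _ => ![1, -1], 0, rfl⟩,
    fun y => ?_⟩
  simp [relu, mulVec, dotProduct, vecHead, vecTail, sub_eq_add_neg]

lemma max_sub_max_sub_one_mem_Icc (y : ℝ) : max y 0 - max (y - 1) 0 ∈ Set.Icc (0 : ℝ) 1 := by
  rcases max_cases y 0 with ⟨h₁, h₂⟩ | ⟨h₁, h₂⟩ <;>
    rcases max_cases (y - 1) 0 with ⟨h₃, h₄⟩ | ⟨h₃, h₄⟩ <;> constructor <;> linarith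

lemma abs_max_sub_max_sub_one_sub_le {c : ℝ} (hc : c ∈ Set.Icc (0 : ℝ) 1) (y : ℝ) :
    |max y 0 - max (y - 1) 0 - c| ≤ |y - c| := by
  obtain ⟨hc₀, hc₁⟩ := hc
  rw [abs_le]
  rcases max_cases y 0 with ⟨h₁, h₂⟩ | ⟨h₁, h₂⟩ <;>
    rcases max_cases (y - 1) 0 with ⟨h₃, h₄⟩ | ⟨h₃, h₄⟩ <;> constructor <;>
    linarith [le_abs_self (y - c), neg_abs_le (y - c)]

lemma abs_polarization_sub_mul_le {N : ℕ} (hN : 0 < N) {a b : ℝ} (ha : a ∈ Set.Icc (0 : ℝ) 1)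
    (hb : b ∈ Set.Icc (0 : ℝ) 1) (n : ℕ) :
    |2 * sqApprox N n ((a + b) / 2) + -1 / 2 * sqApprox N n a + -1 / 2 * sqApprox N n b - a * b|
      ≤ ((N : ℝ) ^ (2 * n))⁻¹ / 2 := by
  have hmid : (a + b) / 2 ∈ Set.Icc (0 : ℝ) 1 :=
    ⟨by linarith [ha.1, hb.1], by linarith [ha.2, hb.2]⟩
  obtain ⟨e₁, e₁'⟩ := sqApprox_sub_sq_mem_Icc hN hmid n
  obtain ⟨e₂, e₂'⟩ := sqApprox_sub_sq_mem_Icc hN ha n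
  obtain ⟨e₃, e₃'⟩ := sqApprox_sub_sq_mem_Icc hN hb n
  rw [abs_le]
  constructor <;> nlinarith

lemma exists_reluNet_mul {N : ℕ} (hN : 0 < N) (k : ℕ) :
    ∃ g ∈ reluNet (Fin 2) (Fin 1) (Fin (3 * N + 3)) (k + 1), ∀ z, g z 0 ∈ Set.Icc (0 : ℝ) 1 ∧
      (z 0 ∈ Set.Icc (0 : ℝ) 1 → z 1 ∈ Set.Icc (0 : ℝ) 1 →
        |g z 0 - z 0 * z 1| ≤ ((N : ℝ) ^ (2 * (k + 1)))⁻¹ / 2) := by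
  obtain ⟨f₁, hf₁, hf₁z⟩ := exists_reluNet_sqApprox hN k ![1 / 2, 1 / 2]
  obtain ⟨f₂, hf₂, hf₂z⟩ := exists_reluNet_sqApprox hN k ![1, 0]
  obtain ⟨f₃, hf₃, hf₃z⟩ := exists_reluNet_sqApprox hN k ![0, 1]
  obtain ⟨c, hc, hcy⟩ := exists_reluNet_clamp
  have hY := add_mem_reluNet (add_mem_reluNet (smul_mem_reluNet hf₁ 2)
    (smul_mem_reluNet hf₂ (-1 / 2))) (smul_mem_reluNet hf₃ (-1 / 2))
  have hg := comp_mem_reluNet (reluNet_mono_width hY (κ' := Fin (3 * N + 3))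
    (by simp only [Fintype.card_sum, Fintype.card_fin, Fintype.card_unique]; omega))
    (reluNet_mono_width hc (κ' := Fin (3 * N + 3)) (by simp))
  refine ⟨_, hg, fun z => ⟨hcy _ ▸ max_sub_max_sub_one_mem_Icc _, fun hz₀ hz₁ => ?_⟩⟩
  have hmid : ![1 / 2, 1 / 2] ⬝ᵥ z = (z 0 + z 1) / 2 := by
    simp only [dotProduct, Fin.sum_univ_two, cons_val_zero, cons_val_one, cons_val_fin_one]
    ring
  have hfst : ![1, 0] ⬝ᵥ z = z 0 := by simp [dotProduct]
  have hsnd : ![0, 1] ⬝ᵥ z = z 1 := by simp [dotProduct]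
  have hmid_mem : ![1 / 2, 1 / 2] ⬝ᵥ z ∈ Set.Icc (0 : ℝ) 1 :=
    hmid ▸ ⟨by linarith [hz₀.1, hz₁.1], by linarith [hz₀.2, hz₁.2]⟩
  rw [hcy]
  refine (abs_max_sub_max_sub_one_sub_le
    ⟨mul_nonneg hz₀.1 hz₁.1, mul_le_one₀ hz₀.2 hz₁.1 hz₁.2⟩ _).trans ?_
  simp only [Pi.add_apply, Pi.smul_apply, smul_eq_mul]
  rw [hf₁z z hmid_mem, hf₂z z (hfst ▸ hz₀), hf₃z z (hsnd ▸ hz₁), hmid, hfst, hsnd]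
  exact abs_polarization_sub_mul_le hN hz₀ hz₁ (k + 1)

lemma abs_sub_mul_le_add {x a b p ε δ : ℝ} (hx : |x - a * b| ≤ ε) (ha : |a - p| ≤ δ)
    (hb : b ∈ Set.Icc (0 : ℝ) 1) : |x - p * b| ≤ ε + δ := by
  have hδ : |a - p| * b ≤ δ := by nlinarith [abs_nonneg (a - p), hb.1, hb.2]
  calc |x - p * b| ≤ |x - a * b| + |a * b - p * b| := abs_sub_le _ _ _
    _ = |x - a * b| + |a - p| * b := by rw [← sub_mul, abs_mul, abs_of_nonneg hb.1]
    _ ≤ ε + δ := add_le_add hx hδ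

lemma exists_reluNet_prod {N : ℕ} (hN : 0 < N) (k r : ℕ) :
    ∃ p ∈ reluNet (Fin (r + 2)) (Fin 1) (Fin (3 * N + 3 + r)) (k + 1 + r * (k + 2)),
      ∀ w, p w 0 ∈ Set.Icc (0 : ℝ) 1 ∧ ((∀ i, w i ∈ Set.Icc (0 : ℝ) 1) →
        |p w 0 - ∏ i, w i| ≤ (r + 1) * (((N : ℝ) ^ (2 * (k + 1)))⁻¹ / 2)) := by
  obtain ⟨g, hg, hgz⟩ := exists_reluNet_mul hN k
  induction r with
  | zero =>
    refine ⟨g, by simpa using hg, fun w => ⟨(hgz w).1, fun hw => ?_⟩⟩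
    simpa [Fin.prod_univ_two] using (hgz w).2 (hw 0) (hw 1)
  | succ r ih =>
    obtain ⟨p, hp, hpw⟩ := ih
    have hpair := pair_mem_reluNet (precomp_mem_reluNet hp Fin.castSucc)
      (precomp_mem_reluNet (relu_mem_reluNet (ι := Fin 1) _) fun _ => Fin.last (r + 2))
    have hpg := comp_mem_reluNet (reluNet_mono_width hpair (κ' := Fin (3 * N + 3 + (r + 1)))
      (by simp)) (reluNet_mono_width hg (by simp))
    have hdepth : k + 1 + r * (k + 2) + (k + 1) + 1 = k + 1 + (r + 1) * (k + 2) := by ring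
    refine ⟨_, hdepth ▸ hpg, fun w => ⟨(hgz _).1, fun hw => ?_⟩⟩
    have hinit := hpw (w ∘ Fin.castSucc)
    have hmul := (hgz ![p (w ∘ Fin.castSucc) 0, w (Fin.last (r + 2))]).2
    simp only [cons_val_zero, cons_val_one] at hmul
    change |g ![p (w ∘ Fin.castSucc) 0, max (w (Fin.last (r + 2))) 0] 0 - _| ≤ _
    rw [max_eq_left (hw _).1, Fin.prod_univ_castSucc]
    refine (abs_sub_mul_le_add (hmul hinit.1 (hw _)) (hinit.2 fun i => hw _) (hw _)).trans ?_
    push_cast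
    linarith

/-- For any positive integers `N, L, d` with `d ≥ 2`, there is a ReLU
network `φ×^d ∈ F_{d,1}((L+1)(d−1)+d−2, 9N+d−2)` with
`|φ×^d(z) − ∏ᵢzᵢ| ≤ 12(d−1)N^{−L}` and `|φ×^d(z)| ≤ 1` on `[0,1]^d`. -/
theorem statement7 (N L d : ℕ) (hN : 0 < N) (hL : 0 < L) (hd : 2 ≤ d) :
    ∃ φ ∈ NNscalar d ((L + 1) * (d - 1) + d - 2) (9 * N + d - 2),
      (∀ z : Fin d → ℝ, (∀ i, z i ∈ Set.Icc (0 : ℝ) 1) →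
        |φ z - ∏ i, z i| ≤ 12 * ((d : ℝ) - 1) * ((N : ℝ) ^ L)⁻¹) ∧
      ∀ z : Fin d → ℝ, (∀ i, z i ∈ Set.Icc (0 : ℝ) 1) → |φ z| ≤ 1 := by
  obtain ⟨r, rfl⟩ : ∃ r, d = r + 2 := ⟨d - 2, by omega⟩
  obtain ⟨k, rfl⟩ : ∃ k, L = k + 1 := ⟨L - 1, by omega⟩
  obtain ⟨p, hp, hpw⟩ := exists_reluNet_prod hN k r
  have hdepth : k + 1 + r * (k + 2) < (k + 1 + 1) * (r + 2 - 1) + (r + 2) - 2 := by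
    rw [show r + 2 - 1 = r + 1 by omega]
    ring_nf
    omega
  refine ⟨fun z => p z 0, ⟨p, mem_NNclass_of_mem_reluNet hp hdepth
    (by rw [Fintype.card_fin]; omega),
    fun _ => rfl⟩, fun z hz => ?_, fun z _ => abs_le.mpr ⟨by linarith [(hpw z).1.1], (hpw z).1.2⟩⟩
  have hε : ((N : ℝ) ^ (2 * (k + 1)))⁻¹ / 2 ≤ ((N : ℝ) ^ (k + 1))⁻¹ := by
    have hpow : (N : ℝ) ^ (k + 1) ≤ (N : ℝ) ^ (2 * (k + 1)) :=
      pow_le_pow_right₀ (by exact_mod_cast hN) (by omega)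
    linarith [inv_anti₀ (by positivity) hpow, inv_pos.mpr (by positivity : (0 : ℝ) < N ^ (2 * (k + 1)))]
  calc |p z 0 - ∏ i, z i| ≤ (r + 1) * (((N : ℝ) ^ (2 * (k + 1)))⁻¹ / 2) := (hpw z).2 hz
    _ ≤ 12 * (((r + 2 : ℕ) : ℝ) - 1) * ((N : ℝ) ^ (k + 1))⁻¹ := by
      push_cast
      nlinarith [inv_nonneg.mpr (pow_nonneg (N.cast_nonneg (α := ℝ)) (k + 1))]
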